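/- arXiv:2402.10603 — 2 statements merged into one kernel-verified Lean document; each statement's English description precedes it below -/
import Mathlib

section
/- Let r > 0 and m > 0 be constants and let φ, β, V_a, γ, θ, F_L, F_D, F_p : ℝ → ℝ be functions (φ, β twice differentiable; V_a, γ differentiable) with cos β(t) ≠ 0 for all t, satisfying: (i) the kinematics r cos β · φ̇ = V_a cos γ and r β̇ = V_a sin γ; (ii) the tangential force balances m r cos β · φ̈ = −F_L sin γ − F_D cos γ + F_p cos θ + 2 m r φ̇ β̇ sin β and m r β̈ = F_L cos γ − F_D sin γ + F_p sin θ − m g cos β − m r φ̇² cos β sin β; and (iii) θ = γ + α where α : ℝ → ℝ is the angle-of-attack. Then the airspeed satisfies m V̇_a = −F_D + F_p cos α − m g cos β sin γ. -/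
/-- Given the kinematics of circular tethered flight and the tangential force balances
(Newton's second law projected on `e_φ` and `e_β`, with Coriolis/centrifugal terms),
with pitch `θ = γ + α`, the airspeed satisfies
`m V̇_a = −F_D + F_p cos α − m g cos β sin γ`. -/
theorem tethered_airspeed_dynamics
    (r m g : ℝ) (hr : 0 < r) (hm : 0 < m) (hg : 0 < g)
    (φ β Va γ θ FL FD Fp α : ℝ → ℝ)
    (hφ : Differentiable ℝ φ) (hφ' : Differentiable ℝ (deriv φ))
    (hβ : Differentiable ℝ β) (hβ' : Differentiable ℝ (deriv β))
    (hVa : Differentiable ℝ Va) (hγ : Differentiable ℝ γ)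
    (hcos : ∀ t, Real.cos (β t) ≠ 0)
    (hkin1 : ∀ t, r * Real.cos (β t) * deriv φ t = Va t * Real.cos (γ t))
    (hkin2 : ∀ t, r * deriv β t = Va t * Real.sin (γ t))
    (hforce1 : ∀ t, m * r * Real.cos (β t) * deriv (deriv φ) t =
        -FL t * Real.sin (γ t) - FD t * Real.cos (γ t) + Fp t * Real.cos (θ t)
          + 2 * m * r * deriv φ t * deriv β t * Real.sin (β t))
    (hforce2 : ∀ t, m * r * deriv (deriv β) t =
        FL t * Real.cos (γ t) - FD t * Real.sin (γ t) + Fp t * Real.sin (θ t)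
          - m * g * Real.cos (β t)
          - m * r * (deriv φ t) ^ 2 * Real.cos (β t) * Real.sin (β t))
    (hθ : ∀ t, θ t = γ t + α t) :
    ∀ t, m * deriv Va t =
        -FD t + Fp t * Real.cos (α t) - m * g * Real.cos (β t) * Real.sin (γ t) := by
  intro t
  -- derivative of kinematic equation 1
  have hcosβ : HasDerivAt (fun s => Real.cos (β s)) (-Real.sin (β t) * deriv β t) t :=
    (Real.hasDerivAt_cos (β t)).comp t (hβ t).hasDerivAt
  have d1 : HasDerivAt (fun s => r * Real.cos (β s) * deriv φ s)
      ((r * (-Real.sin (β t) * deriv β t)) * deriv φ t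
        + (r * Real.cos (β t)) * deriv (deriv φ) t) t :=
    (hcosβ.const_mul r).mul (hφ' t).hasDerivAt
  have d1' : HasDerivAt (fun s => Va s * Real.cos (γ s))
      (deriv Va t * Real.cos (γ t)
        + Va t * (-Real.sin (γ t) * deriv γ t)) t :=
    (hVa t).hasDerivAt.mul ((Real.hasDerivAt_cos (γ t)).comp t (hγ t).hasDerivAt)
  have hfun1 : (fun s => r * Real.cos (β s) * deriv φ s)
      = fun s => Va s * Real.cos (γ s) := funext hkin1
  have E1 : (r * (-Real.sin (β t) * deriv β t)) * deriv φ t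
        + (r * Real.cos (β t)) * deriv (deriv φ) t
      = deriv Va t * Real.cos (γ t) + Va t * (-Real.sin (γ t) * deriv γ t) :=
    (hfun1 ▸ d1).unique d1'
  -- derivative of kinematic equation 2
  have d2 : HasDerivAt (fun s => r * deriv β s) (r * deriv (deriv β) t) t :=
    (hβ' t).hasDerivAt.const_mul r
  have d2' : HasDerivAt (fun s => Va s * Real.sin (γ s))
      (deriv Va t * Real.sin (γ t) + Va t * (Real.cos (γ t) * deriv γ t)) t :=
    (hVa t).hasDerivAt.mul ((Real.hasDerivAt_sin (γ t)).comp t (hγ t).hasDerivAt)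
  have hfun2 : (fun s => r * deriv β s) = fun s => Va s * Real.sin (γ s) := funext hkin2
  have E2 : r * deriv (deriv β) t
      = deriv Va t * Real.sin (γ t) + Va t * (Real.cos (γ t) * deriv γ t) :=
    (hfun2 ▸ d2).unique d2'
  have hC : Real.cos (θ t)
      = Real.cos (γ t) * Real.cos (α t) - Real.sin (γ t) * Real.sin (α t) := by
    rw [hθ]; exact Real.cos_add _ _
  have hS : Real.sin (θ t)
      = Real.sin (γ t) * Real.cos (α t) + Real.cos (γ t) * Real.sin (α t) := by
    rw [hθ]; exact Real.sin_add _ _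
  have P : Real.sin (γ t) ^ 2 + Real.cos (γ t) ^ 2 = 1 := Real.sin_sq_add_cos_sq _
  linear_combination
    (-(m * Real.cos (γ t))) * E1 + (-(m * Real.sin (γ t))) * E2
      + Real.cos (γ t) * hforce1 t + Real.sin (γ t) * hforce2 t
      + (-(m * deriv φ t * Real.sin (β t) * Real.sin (γ t))) * hkin1 t
      + (m * deriv φ t * Real.sin (β t) * Real.cos (γ t)) * hkin2 t
      + Fp t * Real.cos (γ t) * hC + Fp t * Real.sin (γ t) * hS
      + (-(m * deriv Va t - Fp t * Real.cos (α t) + FD t)) * P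
end

section
/- Let r > 0 and m > 0 be constants and let φ, β, V_a, γ, θ, F_L, F_D, F_p : ℝ → ℝ be functions (φ, β twice differentiable; V_a, γ differentiable) with cos β(t) ≠ 0 and V_a(t) ≠ 0 for all t, satisfying: (i) the kinematics r cos β · φ̇ = V_a cos γ and r β̇ = V_a sin γ; (ii) the tangential force balances m r cos β · φ̈ = −F_L sin γ − F_D cos γ + F_p cos θ + 2 m r φ̇ β̇ sin β and m r β̈ = F_L cos γ − F_D sin γ + F_p sin θ − m g cos β − m r φ̇² cos β sin β; and (iii) θ = γ + α where α : ℝ → ℝ is the angle-of-attack. Then the flight-path angle satisfies m V_a γ̇ = F_L + F_p sin α − m g cos β cos γ − (m V_a²/r) tan β cos γ. -/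
/-!
The tangential velocity `(u, v) = (r cos β φ̇, r β̇)` equals `V_a (cos γ, sin γ)`, so
`V_a γ̇ = v̇ cos γ − u̇ sin γ` is the acceleration projected on the normal `(−sin γ, cos γ)` of the
velocity. Along that normal the drag drops out, the thrust contributes `F_p sin (θ − γ)`, and by the
kinematics the inertial terms sum to `−m V_a φ̇ sin β = −(m V_a²/r) tan β cos γ`.
-/

open Real

theorem mul_deriv_angle_eq_of_polar {V γ u v : ℝ → ℝ} {t : ℝ}
    (hu : ∀ s, u s = V s * cos (γ s)) (hv : ∀ s, v s = V s * sin (γ s))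
    (hV : DifferentiableAt ℝ V t) (hγ : DifferentiableAt ℝ γ t) :
    V t * deriv γ t = deriv v t * cos (γ t) - deriv u t * sin (γ t) := by
  have hu' : deriv u t = deriv V t * cos (γ t) - V t * sin (γ t) * deriv γ t := by
    rw [show u = fun s => V s * cos (γ s) from funext hu]
    exact (hV.hasDerivAt.mul (hγ.hasDerivAt.cos)).deriv.trans (by ring)
  have hv' : deriv v t = deriv V t * sin (γ t) + V t * cos (γ t) * deriv γ t := by
    rw [show v = fun s => V s * sin (γ s) from funext hv]
    exact (hV.hasDerivAt.mul (hγ.hasDerivAt.sin)).deriv.trans (by ring)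
  rw [hu', hv']
  linear_combination (-(V t * deriv γ t)) * sin_sq_add_cos_sq (γ t)

theorem deriv_const_mul_cos_mul {r : ℝ} {β w : ℝ → ℝ} {t : ℝ}
    (hβ : DifferentiableAt ℝ β t) (hw : DifferentiableAt ℝ w t) :
    deriv (fun s => r * cos (β s) * w s) t
      = r * (cos (β t) * deriv w t - sin (β t) * deriv β t * w t) :=
  (((hβ.hasDerivAt.cos).const_mul r).mul hw.hasDerivAt).deriv.trans (by ring)

theorem tethered_flight_path_dynamics_general
    (r m g : ℝ) (hr : 0 < r)
    (φ β Va γ θ FL FD Fp α : ℝ → ℝ)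
    (hφ' : Differentiable ℝ (deriv φ))
    (hβ : Differentiable ℝ β)
    (hVa : Differentiable ℝ Va) (hγ : Differentiable ℝ γ)
    (hcos : ∀ t, Real.cos (β t) ≠ 0)
    (hkin1 : ∀ t, r * Real.cos (β t) * deriv φ t = Va t * Real.cos (γ t))
    (hkin2 : ∀ t, r * deriv β t = Va t * Real.sin (γ t))
    (hforce1 : ∀ t, m * r * Real.cos (β t) * deriv (deriv φ) t =
        -FL t * Real.sin (γ t) - FD t * Real.cos (γ t) + Fp t * Real.cos (θ t)
          + 2 * m * r * deriv φ t * deriv β t * Real.sin (β t))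
    (hforce2 : ∀ t, m * r * deriv (deriv β) t =
        FL t * Real.cos (γ t) - FD t * Real.sin (γ t) + Fp t * Real.sin (θ t)
          - m * g * Real.cos (β t)
          - m * r * (deriv φ t) ^ 2 * Real.cos (β t) * Real.sin (β t))
    (hθ : ∀ t, θ t = γ t + α t) :
    ∀ t, m * Va t * deriv γ t =
        FL t + Fp t * Real.sin (α t) - m * g * Real.cos (β t) * Real.cos (γ t)
          - m * (Va t) ^ 2 / r * Real.tan (β t) * Real.cos (γ t) := by
  intro t
  have hturn := mul_deriv_angle_eq_of_polar (u := fun s => r * cos (β s) * deriv φ s)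
    (v := fun s => r * deriv β s) hkin1 hkin2 (hVa t) (hγ t)
  rw [deriv_const_mul_cos_mul (hβ t) (hφ' t), deriv_const_mul_field'] at hturn
  beta_reduce at hturn
  have hα : sin (α t) = sin (θ t) * cos (γ t) - cos (θ t) * sin (γ t) := by
    rw [← sin_sub, hθ t, add_sub_cancel_left]
  have hφdot : deriv φ t = Va t * cos (γ t) / (r * cos (β t)) := by
    rw [← hkin1 t]
    field_simp [hr.ne', hcos t]
  have hnormal : m * Va t * deriv γ t = FL t + Fp t * sin (α t)
      - m * g * cos (β t) * cos (γ t) - m * Va t * sin (β t) * deriv φ t := by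
    linear_combination m * hturn + cos (γ t) * hforce2 t - sin (γ t) * hforce1 t
      - Fp t * hα - m * sin (β t) * deriv φ t * cos (γ t) * hkin1 t
      - m * sin (β t) * deriv φ t * sin (γ t) * hkin2 t
      + (FL t - m * Va t * sin (β t) * deriv φ t) * sin_sq_add_cos_sq (γ t)
  rw [hnormal, hφdot, tan_eq_sin_div_cos]
  field_simp

/-- Given the kinematics of circular tethered flight and the tangential force balances
(Newton's second law projected on `e_φ` and `e_β`, with Coriolis/centrifugal terms),
with pitch `θ = γ + α` and nonvanishing airspeed, the flight-path angle satisfies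
`m V_a γ̇ = F_L + F_p sin α − m g cos β cos γ − (m V_a²/r) tan β cos γ`. -/
theorem tethered_flight_path_dynamics
    (r m g : ℝ) (hr : 0 < r) (hm : 0 < m) (hg : 0 < g)
    (φ β Va γ θ FL FD Fp α : ℝ → ℝ)
    (hφ : Differentiable ℝ φ) (hφ' : Differentiable ℝ (deriv φ))
    (hβ : Differentiable ℝ β) (hβ' : Differentiable ℝ (deriv β))
    (hVa : Differentiable ℝ Va) (hγ : Differentiable ℝ γ)
    (hcos : ∀ t, Real.cos (β t) ≠ 0)
    (hVa0 : ∀ t, Va t ≠ 0)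
    (hkin1 : ∀ t, r * Real.cos (β t) * deriv φ t = Va t * Real.cos (γ t))
    (hkin2 : ∀ t, r * deriv β t = Va t * Real.sin (γ t))
    (hforce1 : ∀ t, m * r * Real.cos (β t) * deriv (deriv φ) t =
        -FL t * Real.sin (γ t) - FD t * Real.cos (γ t) + Fp t * Real.cos (θ t)
          + 2 * m * r * deriv φ t * deriv β t * Real.sin (β t))
    (hforce2 : ∀ t, m * r * deriv (deriv β) t =
        FL t * Real.cos (γ t) - FD t * Real.sin (γ t) + Fp t * Real.sin (θ t)
          - m * g * Real.cos (β t)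
          - m * r * (deriv φ t) ^ 2 * Real.cos (β t) * Real.sin (β t))
    (hθ : ∀ t, θ t = γ t + α t) :
    ∀ t, m * Va t * deriv γ t =
        FL t + Fp t * Real.sin (α t) - m * g * Real.cos (β t) * Real.cos (γ t)
          - m * (Va t) ^ 2 / r * Real.tan (β t) * Real.cos (γ t) :=
  tethered_flight_path_dynamics_general r m g hr φ β Va γ θ FL FD Fp α hφ' hβ hVa hγ hcos hkin1
    hkin2 hforce1 hforce2 hθ
end
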